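/- arXiv:2302.06777 — 4 statements merged into one kernel-verified Lean document; each statement's English description precedes it below -/
import Mathlib

section
/- Let T be a bounded linear operator on a complex Hilbert space H. Then ‖ℜT‖ ≤ ∫₀¹ ω((1−t)T + tT*) dt ≤ ω(T). -/
/-! Every operator `Sₜ = (1 - t)T + tT*` has the same real part `ℜT`, and for any `A` the
self-adjoint operator `ℜA` satisfies `‖ℜA‖ = ω(ℜA) ≤ (ω(A) + ω(A*))/2 = ω(A)`; this bounds the
integrand from below. Since `ω` is a seminorm with `ω(A*) = ω(A)`, also `ω(Sₜ) ≤ ω(T)` for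
`t ∈ [0, 1]`. The integrand is continuous because `ω` is `1`-Lipschitz for the operator norm. -/

open ContinuousLinearMap

/-- The numerical radius of a bounded operator on a complex inner product space:
`ω(T) = sup { |⟨Tx, x⟩| : ‖x‖ = 1 }`. -/
noncomputable def numRadius {E : Type*} [NormedAddCommGroup E] [InnerProductSpace ℂ E]
    (T : E →L[ℂ] E) : ℝ :=
  ⨆ x : { x : E // ‖x‖ = 1 }, ‖(inner ℂ (T x) (x : E) : ℂ)‖

section numRadius

variable {E : Type*} [NormedAddCommGroup E] [InnerProductSpace ℂ E]

lemma numRadius_nonneg (A : E →L[ℂ] E) : 0 ≤ numRadius A :=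
  Real.iSup_nonneg fun _ => norm_nonneg _

lemma numRadius_le_of_forall {A : E →L[ℂ] E} {c : ℝ} (hc : 0 ≤ c)
    (h : ∀ x : E, ‖x‖ = 1 → ‖(inner ℂ (A x) x : ℂ)‖ ≤ c) : numRadius A ≤ c :=
  Real.iSup_le (fun x => h x x.2) hc

lemma norm_inner_le_opNorm_of_norm_eq_one (A : E →L[ℂ] E) {x : E} (hx : ‖x‖ = 1) :
    ‖(inner ℂ (A x) x : ℂ)‖ ≤ ‖A‖ := by
  simpa [hx] using (norm_inner_le_norm (A x) x).trans
    (mul_le_mul_of_nonneg_right (A.le_opNorm x) (norm_nonneg x))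

lemma numRadius_le_opNorm (A : E →L[ℂ] E) : numRadius A ≤ ‖A‖ :=
  numRadius_le_of_forall (norm_nonneg A) fun _ => norm_inner_le_opNorm_of_norm_eq_one A

lemma norm_inner_le_numRadius {A : E →L[ℂ] E} {x : E} (hx : ‖x‖ = 1) :
    ‖(inner ℂ (A x) x : ℂ)‖ ≤ numRadius A :=
  le_ciSup (f := fun x : {x : E // ‖x‖ = 1} => ‖(inner ℂ (A x) (x : E) : ℂ)‖)
    ⟨‖A‖, by rintro _ ⟨x, rfl⟩; exact norm_inner_le_opNorm_of_norm_eq_one A x.2⟩ ⟨x, hx⟩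

lemma norm_inner_le_numRadius_mul_sq (A : E →L[ℂ] E) (x : E) :
    ‖(inner ℂ (A x) x : ℂ)‖ ≤ numRadius A * ‖x‖ ^ 2 := by
  rcases eq_or_ne x 0 with rfl | hx
  · simp
  have hx' : ‖x‖ ≠ 0 := norm_ne_zero_iff.mpr hx
  have hunit : ‖(‖x‖⁻¹ : ℂ) • x‖ = 1 := by simp [norm_smul, hx']
  have h := norm_inner_le_numRadius (A := A) hunit
  simp only [map_smul, inner_smul_left, inner_smul_right, norm_mul, map_inv₀,
    Complex.conj_ofReal, norm_inv, Complex.norm_real, norm_norm] at h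
  rwa [← mul_assoc, ← mul_inv, inv_mul_le_iff₀ (by positivity), mul_comm, ← sq] at h

lemma numRadius_add_le (A B : E →L[ℂ] E) : numRadius (A + B) ≤ numRadius A + numRadius B :=
  numRadius_le_of_forall (add_nonneg (numRadius_nonneg A) (numRadius_nonneg B)) fun x hx => by
    rw [add_apply, inner_add_left]
    exact (norm_add_le _ _).trans
      (add_le_add (norm_inner_le_numRadius hx) (norm_inner_le_numRadius hx))

lemma numRadius_smul_le (c : ℂ) (A : E →L[ℂ] E) : numRadius (c • A) ≤ ‖c‖ * numRadius A :=
  numRadius_le_of_forall (mul_nonneg (norm_nonneg c) (numRadius_nonneg A)) fun x hx => by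
    rw [smul_apply, inner_smul_left, norm_mul, Complex.norm_conj]
    exact mul_le_mul_of_nonneg_left (norm_inner_le_numRadius hx) (norm_nonneg c)

lemma lipschitzWith_numRadius : LipschitzWith 1 (numRadius : (E →L[ℂ] E) → ℝ) :=
  LipschitzWith.of_le_add fun A B => by
    calc numRadius A = numRadius (B + (A - B)) := by rw [add_sub_cancel]
      _ ≤ numRadius B + ‖A - B‖ :=
        (numRadius_add_le B (A - B)).trans (add_le_add_right (numRadius_le_opNorm _) _)
      _ = numRadius B + dist A B := by rw [dist_eq_norm]

lemma norm_le_numRadius_of_isSymmetric {A : E →L[ℂ] E} (hA : (A : E →ₗ[ℂ] E).IsSymmetric) :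
    ‖A‖ ≤ numRadius A := by
  rw [A.norm_eq_iSup_rayleighQuotient hA]
  refine ciSup_le fun x => ?_
  rcases eq_or_ne x 0 with rfl | hx
  · simpa using numRadius_nonneg A
  rw [rayleighQuotient, reApplyInnerSelf_apply, abs_div, abs_sq,
    div_le_iff₀ (by positivity)]
  exact (Complex.abs_re_le_norm _).trans (norm_inner_le_numRadius_mul_sq A x)

end numRadius

section adjoint

variable {E : Type*} [NormedAddCommGroup E] [InnerProductSpace ℂ E] [CompleteSpace E]

lemma numRadius_adjoint (A : E →L[ℂ] E) : numRadius (adjoint A) = numRadius A := by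
  unfold numRadius
  congr! 2 with x
  rw [adjoint_inner_left, ← inner_conj_symm, Complex.norm_conj]

lemma norm_realPart_le_numRadius (A : E →L[ℂ] E) :
    ‖(2 : ℂ)⁻¹ • (A + adjoint A)‖ ≤ numRadius A := by
  have hsymm : ((2 : ℂ)⁻¹ • (A + adjoint A) : E →L[ℂ] E).toLinearMap.IsSymmetric := by
    rw [← isSelfAdjoint_iff_isSymmetric]
    exact .smul (by simp [IsSelfAdjoint]) (IsSelfAdjoint.add_star_self A)
  calc ‖(2 : ℂ)⁻¹ • (A + adjoint A)‖ ≤ numRadius ((2 : ℂ)⁻¹ • (A + adjoint A)) :=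
        norm_le_numRadius_of_isSymmetric hsymm
    _ ≤ 2⁻¹ * (numRadius A + numRadius (adjoint A)) :=
        (numRadius_smul_le _ _).trans (by
          rw [norm_inv, Complex.norm_two]
          gcongr
          exact numRadius_add_le A (adjoint A))
    _ = numRadius A := by rw [numRadius_adjoint]; ring

end adjoint

section segment

variable {E : Type*} [NormedAddCommGroup E] [InnerProductSpace ℂ E] [CompleteSpace E]

lemma smul_add_smul_adjoint_add_adjoint (A : E →L[ℂ] E) {s t : ℝ} (h : s + t = 1) :
    (s : ℂ) • A + (t : ℂ) • adjoint A + adjoint ((s : ℂ) • A + (t : ℂ) • adjoint A) =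
      A + adjoint A := by
  obtain rfl : s = 1 - t := by linarith
  simp only [map_add, map_smulₛₗ, adjoint_adjoint, Complex.conj_ofReal]
  push_cast
  module

lemma norm_realPart_le_numRadius_smul_add_smul_adjoint (A : E →L[ℂ] E) {s t : ℝ}
    (h : s + t = 1) :
    ‖(2 : ℂ)⁻¹ • (A + adjoint A)‖ ≤ numRadius ((s : ℂ) • A + (t : ℂ) • adjoint A) := by
  simpa only [smul_add_smul_adjoint_add_adjoint A h] using
    norm_realPart_le_numRadius ((s : ℂ) • A + (t : ℂ) • adjoint A)

lemma numRadius_smul_add_smul_adjoint_le (A : E →L[ℂ] E) {s t : ℝ} (hs : 0 ≤ s) (ht : 0 ≤ t)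
    (h : s + t = 1) : numRadius ((s : ℂ) • A + (t : ℂ) • adjoint A) ≤ numRadius A :=
  calc numRadius ((s : ℂ) • A + (t : ℂ) • adjoint A)
      ≤ ‖(s : ℂ)‖ * numRadius A + ‖(t : ℂ)‖ * numRadius (adjoint A) :=
        (numRadius_add_le _ _).trans (add_le_add (numRadius_smul_le _ _) (numRadius_smul_le _ _))
    _ = numRadius A := by
        rw [numRadius_adjoint, Complex.norm_real, Complex.norm_real, Real.norm_of_nonneg hs,
          Real.norm_of_nonneg ht, ← add_mul, h, one_mul]

end segment

/-- `‖ℜT‖ ≤ ∫₀¹ ω((1−t)T + tT*) dt ≤ ω(T)`. -/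
theorem stmt_0 {H : Type*} [NormedAddCommGroup H] [InnerProductSpace ℂ H] [CompleteSpace H]
    (T : H →L[ℂ] H) :
    ‖(2 : ℂ)⁻¹ • (T + adjoint T)‖ ≤
        (∫ t in (0:ℝ)..1, numRadius (((1 - t : ℝ) : ℂ) • T + ((t : ℝ) : ℂ) • adjoint T)) ∧
      (∫ t in (0:ℝ)..1, numRadius (((1 - t : ℝ) : ℂ) • T + ((t : ℝ) : ℂ) • adjoint T)) ≤
        numRadius T := by
  set f : ℝ → ℝ := fun t => numRadius (((1 - t : ℝ) : ℂ) • T + ((t : ℝ) : ℂ) • adjoint T)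
  have hf : IntervalIntegrable f MeasureTheory.volume 0 1 :=
    (lipschitzWith_numRadius.continuous.comp (by fun_prop)).intervalIntegrable 0 1
  constructor
  · calc ‖(2 : ℂ)⁻¹ • (T + adjoint T)‖ = ∫ _ in (0:ℝ)..1, ‖(2 : ℂ)⁻¹ • (T + adjoint T)‖ := by
          simp
      _ ≤ ∫ t in (0:ℝ)..1, f t :=
        intervalIntegral.integral_mono_on zero_le_one intervalIntegrable_const hf fun t _ =>
          norm_realPart_le_numRadius_smul_add_smul_adjoint T (sub_add_cancel 1 t)
  · calc ∫ t in (0:ℝ)..1, f t ≤ ∫ _ in (0:ℝ)..1, numRadius T :=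
          intervalIntegral.integral_mono_on zero_le_one hf intervalIntegrable_const fun t ht =>
            numRadius_smul_add_smul_adjoint_le T (sub_nonneg.mpr ht.2) ht.1 (sub_add_cancel 1 t)
      _ = numRadius T := by simp
end

section
/- Let T be a bounded linear operator on a complex Hilbert space H. Then ‖ℜT‖ ≤ ∫₀¹ ‖(1−t)T + tT*‖ dt ≤ ‖T‖. -/
/-!
The segment `t ↦ (1 - t) • T + t • T*` averages over `[0, 1]` to `ℜT`, so the first inequality is
`‖∫ f‖ ≤ ∫ ‖f‖`; the second is the triangle inequality along the segment together with `‖T*‖ = ‖T‖`.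
-/

open ContinuousLinearMap

section Segment

variable {E : Type*} [NormedAddCommGroup E] [NormedSpace ℝ E]

theorem integral_segment [CompleteSpace E] (a b : E) :
    ∫ t in (0:ℝ)..1, (1 - t) • a + t • b = (2:ℝ)⁻¹ • (a + b) := by
  rw [intervalIntegral.integral_add
      ((by fun_prop : Continuous fun t : ℝ => (1 - t) • a).intervalIntegrable _ _)
      ((by fun_prop : Continuous fun t : ℝ => t • b).intervalIntegrable _ _),
    intervalIntegral.integral_smul_const, intervalIntegral.integral_smul_const,
    intervalIntegral.integral_sub intervalIntegrable_const intervalIntegral.intervalIntegrable_id,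
    integral_id, smul_add]
  norm_num

theorem norm_segment_le {t : ℝ} (ht : t ∈ Set.Icc (0:ℝ) 1) (a b : E) :
    ‖(1 - t) • a + t • b‖ ≤ (1 - t) * ‖a‖ + t * ‖b‖ := by
  calc ‖(1 - t) • a + t • b‖ ≤ ‖(1 - t) • a‖ + ‖t • b‖ := norm_add_le _ _
    _ = (1 - t) * ‖a‖ + t * ‖b‖ := by
      rw [norm_smul, norm_smul, Real.norm_of_nonneg (sub_nonneg.2 ht.2), Real.norm_of_nonneg ht.1]

theorem integral_norm_segment_le (a b : E) :
    ∫ t in (0:ℝ)..1, ‖(1 - t) • a + t • b‖ ≤ (‖a‖ + ‖b‖) / 2 := by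
  calc ∫ t in (0:ℝ)..1, ‖(1 - t) • a + t • b‖
      ≤ ∫ t in (0:ℝ)..1, (1 - t) * ‖a‖ + t * ‖b‖ :=
        intervalIntegral.integral_mono_on zero_le_one
          ((by fun_prop : Continuous fun t : ℝ => ‖(1 - t) • a + t • b‖).intervalIntegrable _ _)
          ((by fun_prop : Continuous fun t : ℝ => (1 - t) * ‖a‖ + t * ‖b‖).intervalIntegrable _ _)
          fun t ht => norm_segment_le ht a b
    _ = (‖a‖ + ‖b‖) / 2 := (integral_segment ‖a‖ ‖b‖).trans (by rw [smul_eq_mul]; ring)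

theorem norm_midpoint_le_integral_norm_segment [CompleteSpace E] (a b : E) :
    ‖(2:ℝ)⁻¹ • (a + b)‖ ≤ ∫ t in (0:ℝ)..1, ‖(1 - t) • a + t • b‖ := by
  rw [← integral_segment]
  exact intervalIntegral.norm_integral_le_integral_norm zero_le_one

end Segment

/-- `‖ℜT‖ ≤ ∫₀¹ ‖(1−t)T + tT*‖ dt ≤ ‖T‖`. -/
theorem stmt_2 {H : Type*} [NormedAddCommGroup H] [InnerProductSpace ℂ H] [CompleteSpace H]
    (T : H →L[ℂ] H) :
    ‖(2 : ℂ)⁻¹ • (T + adjoint T)‖ ≤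
        (∫ t in (0:ℝ)..1, ‖((1 - t : ℝ) : ℂ) • T + ((t : ℝ) : ℂ) • adjoint T‖) ∧
      (∫ t in (0:ℝ)..1, ‖((1 - t : ℝ) : ℂ) • T + ((t : ℝ) : ℂ) • adjoint T‖) ≤ ‖T‖ := by
  have half : (2 : ℂ)⁻¹ • (T + adjoint T) = (2 : ℝ)⁻¹ • (T + adjoint T) := by
    rw [← Complex.coe_smul]; push_cast; rfl
  simp only [Complex.coe_smul, half]
  refine ⟨norm_midpoint_le_integral_norm_segment T (adjoint T), ?_⟩
  simpa [adjoint.norm_map] using integral_norm_segment_le T (adjoint T)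
end

section
/- Let T be a bounded linear operator on a complex Hilbert space H. Then ‖ℑT‖ ≤ ∫₀¹ ‖(1−t)T* − tT‖ dt ≤ ‖T‖. -/
open ContinuousLinearMap

/-!
Put `g(t) = ‖(1 - t) T* - t T‖`. The vectors inside `g t` and `g (1 - t)` add up to `T* - T`, so
`‖T - T*‖ ≤ g t + g (1 - t)`; integrating over `[0, 1]`, where `t ↦ 1 - t` preserves the integral,
gives `‖ℑT‖ = ‖T - T*‖ / 2 ≤ ∫ g`. The upper bound is the triangle inequality
`g t ≤ (1 - t) ‖T*‖ + t ‖T‖` integrated, together with `‖T*‖ = ‖T‖`.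
-/

section Segment

variable {E : Type*} [NormedAddCommGroup E] [NormedSpace ℝ E]

theorem continuous_norm_sub_smul (a b : E) :
    Continuous fun t : ℝ => ‖(1 - t) • a - t • b‖ := by
  fun_prop

theorem norm_sub_le_norm_sub_smul_add_norm_sub_smul (a b : E) (t : ℝ) :
    ‖a - b‖ ≤ ‖(1 - t) • a - t • b‖ + ‖(1 - (1 - t)) • a - (1 - t) • b‖ := by
  have hsum : ((1 - t) • a - t • b) + ((1 - (1 - t)) • a - (1 - t) • b) = a - b := by module
  exact hsum ▸ norm_add_le _ _

theorem norm_sub_le_two_mul_integral_norm_sub_smul (a b : E) :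
    ‖a - b‖ ≤ 2 * ∫ t in (0 : ℝ)..1, ‖(1 - t) • a - t • b‖ := by
  set g : ℝ → ℝ := fun t => ‖(1 - t) • a - t • b‖
  have hg : Continuous g := continuous_norm_sub_smul a b
  have hg_int : IntervalIntegrable g MeasureTheory.volume 0 1 := hg.intervalIntegrable 0 1
  have hg_flip_int : IntervalIntegrable (fun t => g (1 - t)) MeasureTheory.volume 0 1 :=
    (hg.comp (continuous_const.sub continuous_id)).intervalIntegrable 0 1
  have hflip : ∫ t in (0 : ℝ)..1, g (1 - t) = ∫ t in (0 : ℝ)..1, g t := by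
    simp [intervalIntegral.integral_comp_sub_left g 1]
  calc ‖a - b‖ = ∫ _ in (0 : ℝ)..1, ‖a - b‖ := by simp
    _ ≤ ∫ t in (0 : ℝ)..1, (g t + g (1 - t)) :=
      intervalIntegral.integral_mono_on zero_le_one intervalIntegrable_const
        (hg_int.add hg_flip_int) fun t _ => norm_sub_le_norm_sub_smul_add_norm_sub_smul a b t
    _ = 2 * ∫ t in (0 : ℝ)..1, g t := by
      rw [intervalIntegral.integral_add hg_int hg_flip_int, hflip, two_mul]

theorem integral_norm_sub_smul_le (a b : E) :
    ∫ t in (0 : ℝ)..1, ‖(1 - t) • a - t • b‖ ≤ (‖a‖ + ‖b‖) / 2 := by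
  have hpoint : ∀ t ∈ Set.Icc (0 : ℝ) 1,
      ‖(1 - t) • a - t • b‖ ≤ (1 - t) * ‖a‖ + t * ‖b‖ := by
    rintro t ⟨ht₀, ht₁⟩
    calc ‖(1 - t) • a - t • b‖ ≤ ‖(1 - t) • a‖ + ‖t • b‖ := norm_sub_le _ _
      _ = (1 - t) * ‖a‖ + t * ‖b‖ := by
        rw [norm_smul, norm_smul, Real.norm_of_nonneg (sub_nonneg.2 ht₁), Real.norm_of_nonneg ht₀]
  calc ∫ t in (0 : ℝ)..1, ‖(1 - t) • a - t • b‖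
      ≤ ∫ t in (0 : ℝ)..1, ((1 - t) * ‖a‖ + t * ‖b‖) :=
        intervalIntegral.integral_mono_on zero_le_one
          ((continuous_norm_sub_smul a b).intervalIntegrable 0 1)
          (Continuous.intervalIntegrable (by fun_prop) 0 1) hpoint
    _ = (‖a‖ + ‖b‖) / 2 := by
      rw [intervalIntegral.integral_add
          (Continuous.intervalIntegrable (by fun_prop : Continuous fun t : ℝ => (1 - t) * ‖a‖) 0 1)
          (Continuous.intervalIntegrable (by fun_prop : Continuous fun t : ℝ => t * ‖b‖) 0 1),
        intervalIntegral.integral_mul_const, intervalIntegral.integral_mul_const,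
        intervalIntegral.integral_comp_sub_left (fun t => t)]
      norm_num [integral_id]
      ring

end Segment

/-- `‖ℑT‖ ≤ ∫₀¹ ‖(1−t)T* − tT‖ dt ≤ ‖T‖`. -/
theorem stmt_3 {H : Type*} [NormedAddCommGroup H] [InnerProductSpace ℂ H] [CompleteSpace H]
    (T : H →L[ℂ] H) :
    ‖(2 * Complex.I)⁻¹ • (T - adjoint T)‖ ≤
        (∫ t in (0:ℝ)..1, ‖((1 - t : ℝ) : ℂ) • adjoint T - ((t : ℝ) : ℂ) • T‖) ∧
      (∫ t in (0:ℝ)..1, ‖((1 - t : ℝ) : ℂ) • adjoint T - ((t : ℝ) : ℂ) • T‖) ≤ ‖T‖ := by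
  simp only [Complex.coe_smul]
  have him : ‖(2 * Complex.I)⁻¹ • (T - adjoint T)‖ = ‖adjoint T - T‖ / 2 := by
    rw [norm_smul, norm_sub_rev]
    simp [div_eq_inv_mul]
  have hadj : ‖adjoint T‖ = ‖T‖ := by simp [← star_eq_adjoint]
  constructor
  · rw [him]
    linarith [norm_sub_le_two_mul_integral_norm_sub_smul (adjoint T) T]
  · simpa [hadj] using integral_norm_sub_smul_le (adjoint T) T
end

section
/- Let T be a bounded linear operator on a complex Hilbert space H. Then (1/2)‖T‖ + (1/2)·| ‖ℑT‖ − ‖ℜT‖ | ≤ (1/2)‖T‖ + (1/2)·(2ω(T) − (‖ℑT‖ + ‖ℜT‖)) ≤ ω(T). -/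
/-!
The real and imaginary parts `ℜT`, `ℑT` are self-adjoint, so their norms are the suprema of
`|⟨ℜT x, x⟩| = |Re ⟨T x, x⟩|` and `|⟨ℑT x, x⟩| = |Im ⟨T x, x⟩|` over unit vectors; both are
therefore at most `ω(T)`. Together with `‖T‖ ≤ ‖ℜT‖ + ‖ℑT‖`, from `T = ℜT + i ℑT`, the two
inequalities are linear arithmetic: the first says `‖ℜT‖, ‖ℑT‖ ≤ ω(T)`, the second says
`‖T‖ ≤ ‖ℜT‖ + ‖ℑT‖`.
-/

open ContinuousLinearMap

open ComplexStarModule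

theorem LinearMap.IsSymmetric.norm_le_of_abs_re_inner_self_le {𝕜 E : Type*} [RCLike 𝕜]
    [NormedAddCommGroup E] [InnerProductSpace 𝕜 E] {S : E →L[𝕜] E} (hS : S.IsSymmetric)
    {c : ℝ} (hc : 0 ≤ c) (h : ∀ x, |RCLike.re (inner 𝕜 (S x) x)| ≤ c * ‖x‖ ^ 2) : ‖S‖ ≤ c := by
  rw [S.norm_eq_iSup_rayleighQuotient hS]
  refine ciSup_le fun x => ?_
  rw [rayleighQuotient, reApplyInnerSelf_apply, abs_div, abs_sq]
  exact div_le_of_le_mul₀ (sq_nonneg _) hc (h x)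

theorem norm_le_norm_realPart_add_norm_imaginaryPart {A : Type*} [SeminormedAddCommGroup A]
    [NormedSpace ℂ A] [StarAddMonoid A] [StarModule ℂ A] (a : A) :
    ‖a‖ ≤ ‖(ℜ a : A)‖ + ‖(ℑ a : A)‖ := by
  conv_lhs => rw [← realPart_add_I_smul_imaginaryPart a]
  refine (norm_add_le _ _).trans_eq ?_
  rw [norm_smul, Complex.norm_I, one_mul]

section NumRadius

variable {H : Type*} [NormedAddCommGroup H] [InnerProductSpace ℂ H]

theorem numRadius_nonneg_s9 (T : H →L[ℂ] H) : 0 ≤ numRadius T :=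
  Real.iSup_nonneg fun _ => norm_nonneg _

theorem norm_inner_self_le_numRadius_mul (T : H →L[ℂ] H) (x : H) :
    ‖inner ℂ (T x) x‖ ≤ numRadius T * ‖x‖ ^ 2 := by
  rcases eq_or_ne x 0 with rfl | hx
  · simp
  have hbdd : BddAbove (Set.range fun u : { u : H // ‖u‖ = 1 } => ‖inner ℂ (T u) (u : H)‖) := by
    refine ⟨‖T‖, ?_⟩
    rintro _ ⟨⟨u, hu⟩, rfl⟩
    simpa [hu] using (norm_inner_le_norm (𝕜 := ℂ) (T u) u).trans
      (mul_le_mul_of_nonneg_right (T.le_opNorm u) (norm_nonneg u))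
  have hunit : ‖(‖x‖ : ℂ)⁻¹ • x‖ = 1 := by
    rw [norm_smul, norm_inv, Complex.norm_real, norm_norm,
      inv_mul_cancel₀ (norm_ne_zero_iff.mpr hx)]
  have hle := le_ciSup hbdd ⟨_, hunit⟩
  simp only [map_smul, inner_smul_left, inner_smul_right, norm_mul, norm_inv, RCLike.norm_conj,
    Complex.norm_real, norm_norm] at hle
  rwa [← mul_assoc, ← mul_inv, ← sq, inv_mul_le_iff₀ (by positivity), mul_comm] at hle

end NumRadius

section Adjoint

variable {H : Type*} [NormedAddCommGroup H] [InnerProductSpace ℂ H] [CompleteSpace H]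

theorem realPart_eq_smul_add_adjoint (T : H →L[ℂ] H) :
    (ℜ T : H →L[ℂ] H) = (2 : ℂ)⁻¹ • (T + adjoint T) := by
  rw [realPart_apply_coe, star_eq_adjoint]
  match_scalars <;> simp

theorem imaginaryPart_eq_smul_sub_adjoint (T : H →L[ℂ] H) :
    (ℑ T : H →L[ℂ] H) = (2 * Complex.I)⁻¹ • (T - adjoint T) := by
  rw [imaginaryPart_apply_coe, star_eq_adjoint]
  match_scalars <;> rw [mul_inv, Complex.inv_I] <;> ring

theorem norm_realPart_le_of_norm_inner_self_le (T : H →L[ℂ] H) {c : ℝ} (hc : 0 ≤ c)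
    (h : ∀ x, ‖inner ℂ (T x) x‖ ≤ c * ‖x‖ ^ 2) : ‖(ℜ T : H →L[ℂ] H)‖ ≤ c := by
  refine (ℜ T).2.isSymmetric.norm_le_of_abs_re_inner_self_le hc fun x => ?_
  have hre : RCLike.re (inner ℂ ((ℜ T : H →L[ℂ] H) x) x) = RCLike.re (inner ℂ (T x) x) := by
    rw [realPart_eq_smul_add_adjoint, smul_apply, inner_smul_left, add_apply, inner_add_left,
      adjoint_inner_left, ← inner_conj_symm x, Complex.add_conj]
    simp
  exact hre ▸ (RCLike.abs_re_le_norm _).trans (h x)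

theorem norm_imaginaryPart_le_of_norm_inner_self_le (T : H →L[ℂ] H) {c : ℝ} (hc : 0 ≤ c)
    (h : ∀ x, ‖inner ℂ (T x) x‖ ≤ c * ‖x‖ ^ 2) : ‖(ℑ T : H →L[ℂ] H)‖ ≤ c := by
  have hℑ : (ℑ T : H →L[ℂ] H) = ℜ (-Complex.I • T) := by
    rw [realPart_apply_coe, imaginaryPart_apply_coe, star_smul, Complex.star_def, map_neg,
      Complex.conj_I]
    match_scalars <;> ring
  rw [hℑ]
  refine norm_realPart_le_of_norm_inner_self_le _ hc fun x => ?_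
  simpa [inner_smul_left] using h x

end Adjoint

/-- `(1/2)‖T‖ + (1/2)|‖ℑT‖ − ‖ℜT‖| ≤ (1/2)‖T‖ + (1/2)(2ω(T) − (‖ℑT‖ + ‖ℜT‖)) ≤ ω(T)`. -/
theorem stmt_9 {H : Type*} [NormedAddCommGroup H] [InnerProductSpace ℂ H] [CompleteSpace H]
    (T : H →L[ℂ] H) :
    (1 / 2 : ℝ) * ‖T‖ +
        (1 / 2 : ℝ) * |‖(2 * Complex.I)⁻¹ • (T - adjoint T)‖ - ‖(2 : ℂ)⁻¹ • (T + adjoint T)‖| ≤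
        (1 / 2 : ℝ) * ‖T‖ +
          (1 / 2 : ℝ) *
            (2 * numRadius T -
              (‖(2 * Complex.I)⁻¹ • (T - adjoint T)‖ + ‖(2 : ℂ)⁻¹ • (T + adjoint T)‖)) ∧
      (1 / 2 : ℝ) * ‖T‖ +
          (1 / 2 : ℝ) *
            (2 * numRadius T -
              (‖(2 * Complex.I)⁻¹ • (T - adjoint T)‖ + ‖(2 : ℂ)⁻¹ • (T + adjoint T)‖)) ≤
        numRadius T := by
  rw [← realPart_eq_smul_add_adjoint, ← imaginaryPart_eq_smul_sub_adjoint]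
  set a := ‖(ℜ T : H →L[ℂ] H)‖
  set b := ‖(ℑ T : H →L[ℂ] H)‖
  have ha : a ≤ numRadius T := norm_realPart_le_of_norm_inner_self_le T (numRadius_nonneg_s9 T)
    (norm_inner_self_le_numRadius_mul T)
  have hb : b ≤ numRadius T := norm_imaginaryPart_le_of_norm_inner_self_le T
    (numRadius_nonneg_s9 T) (norm_inner_self_le_numRadius_mul T)
  have hT : ‖T‖ ≤ a + b := norm_le_norm_realPart_add_norm_imaginaryPart T
  have hab : |b - a| ≤ 2 * numRadius T - (b + a) :=
    abs_sub_le_iff.mpr ⟨by linarith, by linarith⟩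
  constructor <;> linarith
end
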